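/- arXiv:2602.03329 — 3 statements merged into one kernel-verified Lean document; each statement's English description precedes it below -/
import Mathlib

section
/- Let f be L_f-smooth and μ_f-strongly convex, and let g: ℝ^d → ℝ^d satisfy ‖∇f(x) − g(x)‖² ≤ ζ² for all x. Then the pair (f − ζ²/μ_f, g) is a (δ, 2L_f, μ_f/2)-oracle of f with δ = (1/(2L_f) + 1/μ_f)ζ²; that is, for all x, y: (μ_f/4)‖x−y‖² ≤ f(x) − (f(y) − ζ²/μ_f) − ⟨g(y), x−y⟩ ≤ L_f‖x−y‖² + (1/(2L_f) + 1/μ_f)ζ². -/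
/-!
Since `g` is within `ζ` of `∇f`, the two bounds follow from strong convexity and from the
descent lemma `f x ≤ f y + ⟪∇f y, x - y⟫ + L/2 ‖x - y‖²`, once the error term
`⟪∇f y - g y, x - y⟫` is absorbed by Young's inequality: against `μ/4 ‖x - y‖²` at the price
`ζ²/μ` below, and against `L/2 ‖x - y‖²` at the price `ζ²/(2L)` above.
-/

open RealInnerProductSpace

lemma mul_le_sq_div_add_mul_sq {a b c : ℝ} (hc : 0 < c) :
    a * b ≤ a ^ 2 / (2 * c) + c / 2 * b ^ 2 := by
  rw [div_add' _ _ _ (by positivity), le_div_iff₀ (by positivity)]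
  nlinarith [sq_nonneg (a - c * b)]

section InnerProductSpace

variable {E : Type*} [NormedAddCommGroup E] [InnerProductSpace ℝ E]

lemma abs_inner_le_abs_mul_norm_of_norm_sq_le {u v : E} {ζ : ℝ} (hu : ‖u‖ ^ 2 ≤ ζ ^ 2) :
    |⟪u, v⟫| ≤ |ζ| * ‖v‖ := by
  have hnorm : ‖u‖ ≤ |ζ| := by simpa using sq_le_sq.1 hu
  exact (abs_real_inner_le_norm u v).trans (by gcongr)

lemma HasGradientAt.hasDerivAt_comp_add_smul [CompleteSpace E] {f : E → ℝ} {f' y v : E} {t : ℝ}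
    (hf : HasGradientAt f f' (y + t • v)) :
    HasDerivAt (fun s : ℝ => f (y + s • v)) ⟪f', v⟫ t := by
  have hline : HasDerivAt (fun s : ℝ => y + s • v) v t := by
    simpa using ((hasDerivAt_id t).smul_const v).const_add y
  exact hf.hasFDerivAt.comp_hasDerivAt t hline

lemma sub_sub_inner_le_of_lipschitz_gradient [CompleteSpace E] {f : E → ℝ} {f' : E → E} {L : ℝ}
    (hgrad : ∀ x, HasGradientAt f (f' x) x)
    (hsmooth : ∀ x y, ‖f' x - f' y‖ ≤ L * ‖x - y‖) (x y : E) :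
    f x - f y - ⟪f' y, x - y⟫ ≤ L / 2 * ‖x - y‖ ^ 2 := by
  set v := x - y
  set φ : ℝ → ℝ := fun t => f (y + t • v) - t * ⟪f' y, v⟫
  have hφ : ∀ t, HasDerivAt φ (⟪f' (y + t • v), v⟫ - ⟪f' y, v⟫) t := fun t =>
    ((hgrad _).hasDerivAt_comp_add_smul).sub (by simpa using (hasDerivAt_id t).mul_const _)
  have hB : ∀ t, HasDerivAt (fun t : ℝ => φ 0 + L / 2 * ‖v‖ ^ 2 * t ^ 2)
      (L * ‖v‖ ^ 2 * t) t := fun t => by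
    refine (((hasDerivAt_pow 2 t).const_mul (L / 2 * ‖v‖ ^ 2)).const_add (φ 0)).congr_deriv ?_
    push_cast
    ring
  have hslope : ∀ t, 0 ≤ t → ⟪f' (y + t • v), v⟫ - ⟪f' y, v⟫ ≤ L * ‖v‖ ^ 2 * t := by
    intro t ht
    calc ⟪f' (y + t • v), v⟫ - ⟪f' y, v⟫ = ⟪f' (y + t • v) - f' y, v⟫ := (inner_sub_left ..).symm
      _ ≤ ‖f' (y + t • v) - f' y‖ * ‖v‖ := real_inner_le_norm _ _
      _ ≤ L * ‖t • v‖ * ‖v‖ := by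
        gcongr
        simpa using hsmooth (y + t • v) y
      _ = L * ‖v‖ ^ 2 * t := by rw [norm_smul, Real.norm_of_nonneg ht]; ring
  have h1 := image_le_of_deriv_right_le_deriv_boundary (f := φ)
    (B := fun t : ℝ => φ 0 + L / 2 * ‖v‖ ^ 2 * t ^ 2)
    (fun t _ => (hφ t).continuousAt.continuousWithinAt)
    (fun t _ => (hφ t).hasDerivWithinAt) (by simp)
    (fun t _ => (hB t).continuousAt.continuousWithinAt)
    (fun t _ => (hB t).hasDerivWithinAt) (fun t ht => hslope t ht.1)
    (Set.right_mem_Icc.mpr zero_le_one)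
  simp only [φ, v, zero_smul, add_zero, zero_mul, sub_zero, one_smul, one_mul, one_pow,
    mul_one, add_sub_cancel] at h1
  linarith

end InnerProductSpace

theorem inexact_gradient_is_dLmu_oracle_general {d : ℕ}
    (f : EuclideanSpace ℝ (Fin d) → ℝ)
    (f' g : EuclideanSpace ℝ (Fin d) → EuclideanSpace ℝ (Fin d))
    (Lf μf ζ : ℝ) (hLf : 0 < Lf) (hμf : 0 < μf)
    (hgrad : ∀ x, HasGradientAt f (f' x) x)
    -- L_f-smoothness
    (hsmooth : ∀ x y : EuclideanSpace ℝ (Fin d), ‖f' x - f' y‖ ≤ Lf * ‖x - y‖)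
    -- μ_f-strong convexity
    (hsc : ∀ x y : EuclideanSpace ℝ (Fin d),
      f y + ⟪f' y, x - y⟫ + μf / 2 * ‖x - y‖ ^ 2 ≤ f x)
    -- inexactness of g
    (hinexact : ∀ x, ‖f' x - g x‖ ^ 2 ≤ ζ ^ 2) :
    ∀ x y : EuclideanSpace ℝ (Fin d),
      μf / 4 * ‖x - y‖ ^ 2 ≤ f x - (f y - ζ ^ 2 / μf) - ⟪g y, x - y⟫ ∧
      f x - (f y - ζ ^ 2 / μf) - ⟪g y, x - y⟫ ≤
        Lf * ‖x - y‖ ^ 2 + (1 / (2 * Lf) + 1 / μf) * ζ ^ 2 := by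
  intro x y
  have hdescent := sub_sub_inner_le_of_lipschitz_gradient hgrad hsmooth x y
  have herror := abs_le.mp <|
    abs_inner_le_abs_mul_norm_of_norm_sq_le (v := x - y) (hinexact y)
  rw [inner_sub_left] at herror
  have hyoung_μ := mul_le_sq_div_add_mul_sq (a := |ζ|) (b := ‖x - y‖) (half_pos hμf)
  have hyoung_L := mul_le_sq_div_add_mul_sq (a := |ζ|) (b := ‖x - y‖) hLf
  rw [sq_abs] at hyoung_μ hyoung_L
  have hsplit : (1 / (2 * Lf) + 1 / μf) * ζ ^ 2 = ζ ^ 2 / (2 * Lf) + ζ ^ 2 / μf := by ring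
  have hhalf : ζ ^ 2 / (2 * (μf / 2)) = ζ ^ 2 / μf := by field_simp
  constructor <;> linarith [hsc x y]

/-- An absolutely ζ-inexact gradient of a smooth strongly convex f yields a
((1/(2L_f)+1/μ_f)ζ², 2L_f, μ_f/2)-oracle of f. -/
theorem inexact_gradient_is_dLmu_oracle {d : ℕ}
    (f : EuclideanSpace ℝ (Fin d) → ℝ)
    (f' g : EuclideanSpace ℝ (Fin d) → EuclideanSpace ℝ (Fin d))
    (Lf μf ζ : ℝ) (hLf : 0 < Lf) (hμf : 0 < μf) (hζ : 0 ≤ ζ)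
    (hgrad : ∀ x, HasGradientAt f (f' x) x)
    -- L_f-smoothness
    (hsmooth : ∀ x y : EuclideanSpace ℝ (Fin d), ‖f' x - f' y‖ ≤ Lf * ‖x - y‖)
    -- μ_f-strong convexity
    (hsc : ∀ x y : EuclideanSpace ℝ (Fin d),
      f y + ⟪f' y, x - y⟫ + μf / 2 * ‖x - y‖ ^ 2 ≤ f x)
    -- inexactness of g
    (hinexact : ∀ x, ‖f' x - g x‖ ^ 2 ≤ ζ ^ 2) :
    ∀ x y : EuclideanSpace ℝ (Fin d),
      μf / 4 * ‖x - y‖ ^ 2 ≤ f x - (f y - ζ ^ 2 / μf) - ⟪g y, x - y⟫ ∧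
      f x - (f y - ζ ^ 2 / μf) - ⟪g y, x - y⟫ ≤
        Lf * ‖x - y‖ ^ 2 + (1 / (2 * Lf) + 1 / μf) * ζ ^ 2 :=
  inexact_gradient_is_dLmu_oracle_general f f' g Lf μf ζ hLf hμf hgrad hsmooth hsc hinexact
end

section
/- Let F₂ be an (f,ν)-robust aggregation rule and let the mixed points y_i be produced by one step of F-robust gossip satisfying the contraction (1/|H|) Σ_{i∈H} ‖y_i − x̄_H‖² ≤ (1 − γ(1−δ)) (1/|H|) Σ_{i∈H} ‖x_i − x̄_H‖² and ‖ȳ_H − x̄_H‖² bounded so that the bias–variance decomposition applies. Then ‖F₂(y_1,…,y_n) − x̄_H‖² ≤ (1+ν)(1 − γ(1−δ)) (1/|H|) Σ_{i∈H} ‖x_i − x̄_H‖². In particular, on the fully connected graph with γ = 1, the composed rule is (f, δ(1+ν))-robust where δ = 2ρf/(n−f). -/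
/-!
By (f,ν)-robustness, `‖F₂ y − ȳ_H‖² ≤ ν · Var_H y`. Young's inequality with parameter `ν`,
applied to the triangle inequality through `ȳ_H`, gives
`‖F₂ y − x̄_H‖² ≤ (1+ν) (Var_H y + ‖ȳ_H − x̄_H‖²)`, and by the bias–variance decomposition the
bracket is the mean squared distance of the `y_i` to `x̄_H`, which the gossip step contracts
by the factor `1 − γ(1−δ)`.
-/

open RealInnerProductSpace Finset

noncomputable section

variable {ι E : Type*}

def Finset.mean [AddCommGroup E] [Module ℝ E] (s : Finset ι) (z : ι → E) : E :=
  (s.card : ℝ)⁻¹ • ∑ i ∈ s, z i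

def Finset.meanSqDist [SeminormedAddCommGroup E] (s : Finset ι) (z : ι → E) (a : E) : ℝ :=
  (s.card : ℝ)⁻¹ * ∑ i ∈ s, ‖z i - a‖ ^ 2

lemma Finset.meanSqDist_nonneg [SeminormedAddCommGroup E] (s : Finset ι) (z : ι → E) (a : E) :
    0 ≤ s.meanSqDist z a := by
  unfold meanSqDist
  positivity

lemma Finset.sum_sub_mean_eq_zero [AddCommGroup E] [Module ℝ E] {s : Finset ι}
    (hs : s.Nonempty) (z : ι → E) :
    ∑ i ∈ s, (z i - s.mean z) = 0 := by
  have hcard : (s.card : ℝ) ≠ 0 := by exact_mod_cast hs.card_pos.ne'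
  rw [sum_sub_distrib, sum_const, mean, ← Nat.cast_smul_eq_nsmul ℝ, smul_smul,
    mul_inv_cancel₀ hcard, one_smul, sub_self]

lemma Finset.meanSqDist_eq_add_norm_sub_sq [NormedAddCommGroup E] [InnerProductSpace ℝ E]
    {s : Finset ι} (hs : s.Nonempty) (z : ι → E) (a : E) :
    s.meanSqDist z a = s.meanSqDist z (s.mean z) + ‖s.mean z - a‖ ^ 2 := by
  have hcard : (s.card : ℝ) ≠ 0 := by exact_mod_cast hs.card_pos.ne'
  have hsum : ∑ i ∈ s, ‖z i - a‖ ^ 2 =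
      ∑ i ∈ s, ‖z i - s.mean z‖ ^ 2 + s.card * ‖s.mean z - a‖ ^ 2 := by
    calc ∑ i ∈ s, ‖z i - a‖ ^ 2
        = ∑ i ∈ s, (‖z i - s.mean z‖ ^ 2 + 2 * ⟪z i - s.mean z, s.mean z - a⟫
            + ‖s.mean z - a‖ ^ 2) := by
          refine sum_congr rfl fun i _ => ?_
          rw [← norm_add_sq_real, sub_add_sub_cancel]
      _ = ∑ i ∈ s, ‖z i - s.mean z‖ ^ 2 + 2 * ⟪∑ i ∈ s, (z i - s.mean z), s.mean z - a⟫
            + s.card * ‖s.mean z - a‖ ^ 2 := by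
          rw [sum_add_distrib, sum_add_distrib, sum_inner, ← mul_sum, sum_const, nsmul_eq_mul]
      _ = _ := by rw [sum_sub_mean_eq_zero hs, inner_zero_left, mul_zero, add_zero]
  rw [meanSqDist, meanSqDist, hsum, mul_add, ← mul_assoc, inv_mul_cancel₀ hcard, one_mul]

end

lemma add_sq_le_one_add_mul_of_sq_le {u v t ν : ℝ} (hν : 0 ≤ ν) (ht : 0 ≤ t)
    (h : u ^ 2 ≤ ν * t) : (u + v) ^ 2 ≤ (1 + ν) * (t + v ^ 2) := by
  rcases hν.eq_or_lt with rfl | hν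
  · nlinarith [sq_nonneg u]
  · -- Young's inequality with parameter `ν`: the defect is `(u - ν v)² / ν`.
    nlinarith [sq_nonneg (u - ν * v)]

lemma norm_sub_sq_le_one_add_mul_of_norm_sub_sq_le {E : Type*} [SeminormedAddCommGroup E]
    {p c a : E} {ν t : ℝ} (hν : 0 ≤ ν) (ht : 0 ≤ t) (h : ‖p - c‖ ^ 2 ≤ ν * t) :
    ‖p - a‖ ^ 2 ≤ (1 + ν) * (t + ‖c - a‖ ^ 2) := by
  have htri : ‖p - a‖ ≤ ‖p - c‖ + ‖c - a‖ := norm_sub_le_norm_sub_add_norm_sub p c a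
  calc ‖p - a‖ ^ 2 ≤ (‖p - c‖ + ‖c - a‖) ^ 2 := by gcongr
    _ ≤ (1 + ν) * (t + ‖c - a‖ ^ 2) := add_sq_le_one_add_mul_of_sq_le hν ht h

/-- Composing an (f,ν)-robust aggregation with a contracting robust-gossip mixing
step yields a (1+ν)(1 − γ(1−δ)) contraction; in particular with γ = 1 the composed
rule is (f, δ(1+ν))-robust. -/
theorem robust_gossip_mixing_composition {d n f : ℕ}
    (H : Finset (Fin n)) (hHcard : H.card = n - f) (hHne : H.Nonempty)
    (F₂ : (Fin n → EuclideanSpace ℝ (Fin d)) → EuclideanSpace ℝ (Fin d))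
    (ν γ δ : ℝ) (hν : 0 ≤ ν)
    -- F₂ is (f, ν)-robust
    (hF₂ : ∀ (z : Fin n → EuclideanSpace ℝ (Fin d)) (S : Finset (Fin n)), S.card = n - f →
      ‖F₂ z - (S.card : ℝ)⁻¹ • ∑ i ∈ S, z i‖ ^ 2 ≤
        ν * ((S.card : ℝ)⁻¹ * ∑ i ∈ S, ‖z i - (S.card : ℝ)⁻¹ • ∑ j ∈ S, z j‖ ^ 2))
    (x y : Fin n → EuclideanSpace ℝ (Fin d))
    -- contraction of the robust-gossip mixing step around the honest average of x
    (hcontr : (H.card : ℝ)⁻¹ * ∑ i ∈ H, ‖y i - (H.card : ℝ)⁻¹ • ∑ j ∈ H, x j‖ ^ 2 ≤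
      (1 - γ * (1 - δ)) *
        ((H.card : ℝ)⁻¹ * ∑ i ∈ H, ‖x i - (H.card : ℝ)⁻¹ • ∑ j ∈ H, x j‖ ^ 2)) :
    ‖F₂ y - (H.card : ℝ)⁻¹ • ∑ j ∈ H, x j‖ ^ 2 ≤
      (1 + ν) * (1 - γ * (1 - δ)) *
        ((H.card : ℝ)⁻¹ * ∑ i ∈ H, ‖x i - (H.card : ℝ)⁻¹ • ∑ j ∈ H, x j‖ ^ 2) ∧
    (γ = 1 → ‖F₂ y - (H.card : ℝ)⁻¹ • ∑ j ∈ H, x j‖ ^ 2 ≤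
      δ * (1 + ν) *
        ((H.card : ℝ)⁻¹ * ∑ i ∈ H, ‖x i - (H.card : ℝ)⁻¹ • ∑ j ∈ H, x j‖ ^ 2)) := by
  have hmain : ‖F₂ y - H.mean x‖ ^ 2 ≤
      (1 + ν) * (1 - γ * (1 - δ)) * H.meanSqDist x (H.mean x) :=
    calc ‖F₂ y - H.mean x‖ ^ 2
        ≤ (1 + ν) * (H.meanSqDist y (H.mean y) + ‖H.mean y - H.mean x‖ ^ 2) :=
          norm_sub_sq_le_one_add_mul_of_norm_sub_sq_le hν (H.meanSqDist_nonneg y _)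
            (hF₂ y H hHcard)
      _ = (1 + ν) * H.meanSqDist y (H.mean x) := by
          rw [H.meanSqDist_eq_add_norm_sub_sq hHne y (H.mean x)]
      _ ≤ (1 + ν) * ((1 - γ * (1 - δ)) * H.meanSqDist x (H.mean x)) := by
          gcongr
          exact hcontr
      _ = (1 + ν) * (1 - γ * (1 - δ)) * H.meanSqDist x (H.mean x) := by ring
  refine ⟨hmain, fun hγ => ?_⟩
  subst hγ
  calc ‖F₂ y - H.mean x‖ ^ 2 ≤ (1 + ν) * (1 - 1 * (1 - δ)) * H.meanSqDist x (H.mean x) := hmain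
    _ = δ * (1 + ν) * H.meanSqDist x (H.mean x) := by ring
end

section
/- Let f = h + g be μ-strongly convex with minimizer x*, h differentiable, and let x_{k+1} minimize approximately the model φ̃_k(x) = ⟨∇̃h(x_k) + ∇g(x_k), x⟩ + D_g(x; x_k) + (1/(2η))‖x − x_k‖². Writing e_k = ∇h(x_k) − ∇̃h(x_k), the following exact decomposition holds: f(x_{k+1}) − f(x*) = [(1/(2η))‖x_k − x*‖² − D_h(x*; x_k)] − [(1/(2η))‖x_{k+1} − x*‖² − D_h(x*; x_{k+1})] − D_f(x*; x_{k+1}) + ⟨∇φ̃_k(x_{k+1}) + e_k, x_{k+1} − x*⟩ + D_h(x_{k+1}; x_k) − (1/(2η))‖x_k − x_{k+1}‖². -/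
open RealInnerProductSpace

/-- Exact decomposition of the suboptimality gap for the inexact proximal step
under similarity (f = h + g). -/
theorem pigs_exact_decomposition {d : ℕ}
    (h g f : EuclideanSpace ℝ (Fin d) → ℝ)
    (h' g' f' : EuclideanSpace ℝ (Fin d) → EuclideanSpace ℝ (Fin d))
    (hf : ∀ x, f x = h x + g x) (hf' : ∀ x, f' x = h' x + g' x)
    (hgradh : ∀ x, HasGradientAt h (h' x) x)
    (hgradg : ∀ x, HasGradientAt g (g' x) x)
    (η : ℝ) (hη : 0 < η)
    -- the inexact gradient of h at x_k and its error e_k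
    (th e : EuclideanSpace ℝ (Fin d))
    (xk xk1 xs : EuclideanSpace ℝ (Fin d))
    (he : e = h' xk - th) :
    f xk1 - f xs =
      ((1 / (2 * η)) * ‖xk - xs‖ ^ 2 - (h xs - h xk - ⟪h' xk, xs - xk⟫))
      - ((1 / (2 * η)) * ‖xk1 - xs‖ ^ 2 - (h xs - h xk1 - ⟪h' xk1, xs - xk1⟫))
      - (f xs - f xk1 - ⟪f' xk1, xs - xk1⟫)
      + ⟪(th + g' xk1 + (1 / η) • (xk1 - xk)) + e, xk1 - xs⟫
      + (h xk1 - h xk - ⟪h' xk, xk1 - xk⟫)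
      - (1 / (2 * η)) * ‖xk - xk1‖ ^ 2 := by
  subst he
  simp only [hf, hf', norm_sub_sq_real, inner_sub_left, inner_sub_right, inner_add_left,
    inner_add_right, real_inner_smul_left]
  simp only [real_inner_self_eq_norm_sq]
  field_simp
  ring
end
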